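/- Let X and Y be Banach spaces, F : X ⇒ Y a set-valued mapping whose graph is convex and locally closed (in the product topology) near (x̄,ȳ) ∈ gph F. Then sr[F](x̄,ȳ) = \overline{|∂F|}(x̄,ȳ), i.e. the metric subregularity modulus of F at (x̄,ȳ) equals the strict subdifferential slope of F at (x̄,ȳ). -/

import Mathlib

open Filter Metric Topology ENNReal

section Defs

variable {X Y : Type*} [NormedAddCommGroup X] [NormedSpace ℝ X]
  [NormedAddCommGroup Y] [NormedSpace ℝ Y]

/-- The Fréchet normal cone to `Ω` at `p`:
`N_Ω(p) := {p* : limsup_{q→p, q∈Ω∖{p}} ⟨p*, q−p⟩/‖q−p‖ ≤ 0}` (empty when `p ∉ Ω`);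
the defining limsup inequality is expressed in the equivalent ε-form. -/
def frNormalCone {E : Type*} [NormedAddCommGroup E] [NormedSpace ℝ E]
    (Ω : Set E) (p : E) : Set (E →L[ℝ] ℝ) :=
  {l | p ∈ Ω ∧ ∀ ε : ℝ, 0 < ε → ∀ᶠ q in 𝓝[Ω \ {p}] p, l (q - p) ≤ ε * ‖q - p‖}

/-- The Fréchet coderivative of `F` at `(x,y) ∈ gph F`:
`D*F(x,y)(y*) := {x* : (x*,−y*) ∈ N_{gph F}(x,y)}`. -/
def coderiv (F : X → Set Y) (x : X) (y : Y) (q : Y →L[ℝ] ℝ) : Set (X →L[ℝ] ℝ) :=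
  {l | l.coprod (-q) ∈ frNormalCone {p : X × Y | p.2 ∈ F p.1} (x, y)}

/-- The duality mapping `J(v) := {y* : ‖y*‖ = 1, ⟨y*,v⟩ = ‖v‖}`. -/
def dualityMap (v : Y) : Set (Y →L[ℝ] ℝ) := {q | ‖q‖ = 1 ∧ q v = ‖v‖}

/-- The subdifferential ρ-slope of `F` at `(x,y) ∈ gph F` (for `y ≠ ȳ`):
`|∂F|_ρ(x,y) := inf {‖x*‖ : x* ∈ D*F(x,y)(J(y−ȳ) + ρB*)}` (`inf ∅ = +∞`). -/
noncomputable def sdSlopeF (F : X → Set Y) (y₀ : Y) (ρ : ℝ) (x : X) (y : Y) : ℝ≥0∞ :=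
  ⨅ (l : X →L[ℝ] ℝ)
    (_ : ∃ q j : Y →L[ℝ] ℝ, j ∈ dualityMap (y - y₀) ∧ ‖q - j‖ ≤ ρ ∧ l ∈ coderiv F x y q),
      (‖l‖₊ : ℝ≥0∞)

/-- The strict subdifferential slope of `F` at `(x̄,ȳ)`:
`\overline{|∂F|}(x̄,ȳ) := lim_{ρ↓0} inf {|∂F|_ρ(x,y) : (x,y) ∈ gph F, x ∉ F⁻¹(ȳ),
‖x−x̄‖ < ρ, ‖y−ȳ‖ < ρ}` (the limit being a supremum by monotonicity; `inf ∅ = +∞`). -/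
noncomputable def strictSdSlopeF (F : X → Set Y) (x₀ : X) (y₀ : Y) : ℝ≥0∞ :=
  ⨆ (ρ : ℝ) (_ : 0 < ρ),
    ⨅ (p : X × Y)
      (_ : p.2 ∈ F p.1 ∧ y₀ ∉ F p.1 ∧ ‖p.1 - x₀‖ < ρ ∧ ‖p.2 - y₀‖ < ρ),
        sdSlopeF F y₀ ρ p.1 p.2

/-- The metric subregularity modulus
`sr[F](x̄,ȳ) := liminf_{x→x̄, x∉F⁻¹(ȳ)} d(ȳ,F(x)) / d(x,F⁻¹(ȳ))`. -/
noncomputable def srMod (F : X → Set Y) (x₀ : X) (y₀ : Y) : ℝ≥0∞ :=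
  ⨆ (δ : ℝ) (_ : 0 < δ),
    ⨅ (x : X) (_ : dist x x₀ < δ ∧ y₀ ∉ F x),
      EMetric.infEdist y₀ (F x) / EMetric.infEdist x {x' | y₀ ∈ F x'}

end Defs

/-!
`sr ≤ strict slope`: since the graph is convex, a Fréchet normal `(x*, -y*)` to it at `(x, y)`
is a global normal, so for every `u ∈ F⁻¹(ȳ)` and `y*` within `ρ` of `J(y - ȳ)`,
`(1 - ρ)‖y - ȳ‖ ≤ ⟨y*, y - ȳ⟩ ≤ ⟨x*, x - u⟩ ≤ ‖x*‖ ‖x - u‖`; hence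
`(1 - ρ) d(ȳ, F x) / d(x, F⁻¹ ȳ) ≤ |∂F|_ρ(x, y)`, and `ρ ↓ 0`.

`strict slope ≤ sr`: if `d(ȳ, F x) < c d(x, F⁻¹ ȳ)` for some `x` near `x̄`, Ekeland's principle
for `(x, y) ↦ ‖y - ȳ‖` on the closed convex piece of the graph near `(x̄, ȳ)`, with the weighted
distance `c ‖·‖ + ρ ‖·‖`, gives `(x', y')` with `x' ∉ F⁻¹ ȳ` minimising
`‖y - ȳ‖ + c ‖x - x'‖ + ρ ‖y - y'‖` on that piece. The convex sum rule (Hahn–Banach) turns this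
into a normal `(x*, -y*)` to the graph with `‖x*‖ ≤ c` and `y* ∈ J(y' - ȳ) + ρ B*`, so
`|∂F|_ρ(x', y') ≤ c`.
-/

open scoped NNReal

section ConvexAnalysis

variable {E : Type*} [NormedAddCommGroup E] [NormedSpace ℝ E]

def HasSubgradientAt (f : E → ℝ) (l : E →L[ℝ] ℝ) (x : E) : Prop :=
  ∀ z, l (z - x) ≤ f z - f x

theorem HasSubgradientAt.norm_le {f : E → ℝ} {l : E →L[ℝ] ℝ} {x : E} {k : ℝ}
    (hl : HasSubgradientAt f l x) (hk : 0 ≤ k) (hf : ∀ z, f z - f x ≤ k * ‖z - x‖) :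
    ‖l‖ ≤ k := by
  refine l.opNorm_le_bound hk fun w => abs_le.2 ⟨?_, ?_⟩
  · have := (hl (x - w)).trans (hf (x - w))
    simp only [sub_sub_cancel_left, map_neg, norm_neg] at this
    linarith
  · simpa using (hl (x + w)).trans (hf (x + w))

theorem HasSubgradientAt.comp_inl {F : Type*} [NormedAddCommGroup F] [NormedSpace ℝ F]
    {f : E × F → ℝ} {l : E × F →L[ℝ] ℝ} {x : E} {y : F} (hl : HasSubgradientAt f l (x, y)) :
    HasSubgradientAt (fun u => f (u, y)) (l.comp (.inl ℝ E F)) x := fun u => by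
  simpa using hl (u, y)

theorem HasSubgradientAt.comp_inr {F : Type*} [NormedAddCommGroup F] [NormedSpace ℝ F]
    {f : E × F → ℝ} {l : E × F →L[ℝ] ℝ} {x : E} {y : F} (hl : HasSubgradientAt f l (x, y)) :
    HasSubgradientAt (fun v => f (x, v)) (l.comp (.inr ℝ E F)) y := fun v => by
  simpa using hl (x, v)

theorem mem_dualityMap_of_hasSubgradientAt {j : E →L[ℝ] ℝ} {y y₀ : E} (hy : y ≠ y₀)
    (hj : HasSubgradientAt (fun v => ‖v - y₀‖) j y) : j ∈ dualityMap (y - y₀) := by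
  have hle : ‖j‖ ≤ 1 := hj.norm_le zero_le_one fun z => by
    simpa using norm_sub_norm_le (z - y₀) (y - y₀)
  have hge : ‖y - y₀‖ ≤ j (y - y₀) := by
    have := hj y₀
    simp only [← neg_sub y y₀, map_neg, sub_self, norm_zero] at this
    linarith
  have hpos : 0 < ‖y - y₀‖ := norm_pos_iff.2 (sub_ne_zero.2 hy)
  have hjv : j (y - y₀) ≤ ‖j‖ * ‖y - y₀‖ := (le_abs_self _).trans (j.le_opNorm _)
  exact ⟨le_antisymm hle (by nlinarith), le_antisymm (by nlinarith) hge⟩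

theorem ContinuousLinearMap.convexOn_norm_sub {F : Type*} [NormedAddCommGroup F]
    [NormedSpace ℝ F] (T : E →L[ℝ] F) (w : F) : ConvexOn ℝ Set.univ fun z => ‖T z - w‖ :=
  (convexOn_norm convex_univ).comp_affineMap (T.toLinearMap.toAffineMap - AffineMap.const ℝ E w)

theorem ConvexOn.exists_affine_between {g : E → ℝ} (hg : ConvexOn ℝ Set.univ g)
    (hgc : Continuous g) {D : Set (E × ℝ)} (hD : Convex ℝ D) (hDne : D.Nonempty)
    (hDg : ∀ d ∈ D, d.2 ≤ g d.1) :
    ∃ (h : E →L[ℝ] ℝ) (r : ℝ), (∀ z, h z + r ≤ g z) ∧ ∀ d ∈ D, d.2 ≤ h d.1 + r := by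
  -- Separate `D` from the open strict epigraph of `g`; the separating functional has negative
  -- `t`-coefficient `γ`, and dividing by `-γ` gives the affine function.
  have hA : IsOpen {p : E × ℝ | p.1 ∈ Set.univ ∧ g p.1 < p.2} := by
    simpa using isOpen_lt (hgc.comp continuous_fst) continuous_snd
  have hAD : Disjoint {p : E × ℝ | p.1 ∈ Set.univ ∧ g p.1 < p.2} D :=
    Set.disjoint_left.2 fun p hpA hpD => (hDg p hpD).not_gt hpA.2
  obtain ⟨f, u, hfA, hfD⟩ := geometric_hahn_banach_open hg.convex_strict_epigraph hA hD hAD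
  set γ := f (0, 1)
  have hf : ∀ z t, f (z, t) = f (z, 0) + t * γ := fun z t => by
    have : ((z, t) : E × ℝ) = (z, 0) + t • (0, 1) := by simp
    rw [this, map_add, map_smul, smul_eq_mul]
  obtain ⟨d, hd⟩ := hDne
  have hγ : γ < 0 := by
    have h₁ := hfA (d.1, g d.1 + 1) ⟨trivial, by simp⟩
    have h₂ := hfD d hd
    rw [hf] at h₁
    rw [← Prod.mk.eta (p := d), hf] at h₂
    nlinarith [hDg d hd]
  have hfg : ∀ z, f (z, 0) + g z * γ ≤ u := fun z => by
    refine le_of_forall_pos_lt_add fun ε hε => ?_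
    have := hfA (z, g z - ε / γ) ⟨trivial, by linarith [div_neg_of_pos_of_neg hε hγ]⟩
    rw [hf, sub_mul, div_mul_cancel₀ _ hγ.ne] at this
    linarith
  refine ⟨(-γ)⁻¹ • f.comp (.inl ℝ E ℝ), u / γ, fun z => ?_, fun d hd => ?_⟩
  · have : (u - f (z, 0)) / γ ≤ g z := (div_le_iff_of_neg hγ).2 (by linarith [hfg z])
    simp only [smul_apply, ContinuousLinearMap.comp_apply,
      ContinuousLinearMap.inl_apply, smul_eq_mul]
    rw [inv_neg, neg_mul, ← div_eq_inv_mul]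
    linarith [sub_div u (f (z, 0)) γ]
  · have h₁ := hfD d hd
    rw [← Prod.mk.eta (p := d), hf] at h₁
    have : d.2 ≤ (u - f (d.1, 0)) / γ := (le_div_iff_of_neg hγ).2 (by linarith)
    simp only [smul_apply, ContinuousLinearMap.comp_apply,
      ContinuousLinearMap.inl_apply, smul_eq_mul]
    rw [inv_neg, neg_mul, ← div_eq_inv_mul]
    linarith [sub_div u (f (d.1, 0)) γ]

/-- The Moreau–Rockafellar sum rule `∂(φ + ι_C + ψ)(x) ⊆ ∂(φ + ι_C)(x) + ∂ψ(x)`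
for continuous `ψ`. -/
theorem exists_hasSubgradientAt_of_le_add {C : Set E} (hC : Convex ℝ C) {φ ψ : E → ℝ}
    (hφ : ConvexOn ℝ C φ) (hψ : ConvexOn ℝ Set.univ ψ) (hψc : Continuous ψ) {x : E}
    (hx : x ∈ C) {η : E →L[ℝ] ℝ} (hη : ∀ z ∈ C, η (z - x) ≤ φ z + ψ z - (φ x + ψ x)) :
    ∃ h, HasSubgradientAt ψ h x ∧ ∀ z ∈ C, (η - h) (z - x) ≤ φ z - φ x := by
  set k : E → ℝ := fun z => η z - φ z + (φ x - η x + ψ x)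
  have hk : ConcaveOn ℝ C k := ((η.toLinearMap.concaveOn hC).sub hφ).add_const _
  obtain ⟨h, r, hhψ, hhk⟩ := hψ.exists_affine_between hψc hk.convex_hypograph
    ⟨(x, ψ x), hx, by simp only [k]; linarith⟩ fun d ⟨hd, hdk⟩ => by
      have := hη d.1 hd
      simp only [map_sub, k] at this hdk
      linarith
  have hr : r = ψ x - h x := le_antisymm (by linarith [hhψ x])
    (by linarith [hhk (x, ψ x) ⟨hx, by simp only [k]; linarith⟩])
  refine ⟨h, fun z => ?_, fun z hz => ?_⟩
  · rw [map_sub]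
    linarith [hhψ z]
  · have := hhk (z, k z) ⟨hz, le_rfl⟩
    simp only [sub_apply, map_sub, k] at this ⊢
    linarith

theorem mem_frNormalCone_of_eventually {Ω : Set E} {p : E} {l : E →L[ℝ] ℝ} (hp : p ∈ Ω)
    (h : ∀ᶠ z in 𝓝 p, z ∈ Ω → l (z - p) ≤ 0) : l ∈ frNormalCone Ω p := by
  refine ⟨hp, fun ε hε => ?_⟩
  filter_upwards [nhdsWithin_le_nhds h, self_mem_nhdsWithin] with q hq hqΩ
  exact (hq hqΩ.1).trans (by positivity)

theorem Convex.apply_sub_nonpos_of_mem_frNormalCone {Ω : Set E} (hΩ : Convex ℝ Ω) {p : E}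
    {l : E →L[ℝ] ℝ} (hl : l ∈ frNormalCone Ω p) {z : E} (hz : z ∈ Ω) : l (z - p) ≤ 0 := by
  rcases eq_or_ne z p with rfl | hzp
  · simp
  have hseg : Tendsto (fun t : ℝ => p + t • (z - p)) (𝓝[>] 0) (𝓝[Ω \ {p}] p) := by
    refine tendsto_nhdsWithin_iff.2 ⟨?_, ?_⟩
    · exact ((Continuous.tendsto' (by fun_prop) 0 p (by simp)).mono_left nhdsWithin_le_nhds)
    · filter_upwards [Ioo_mem_nhdsGT one_pos] with t ht
      refine ⟨hΩ.add_smul_sub_mem hl.1 hz ⟨ht.1.le, ht.2.le⟩, ?_⟩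
      simpa [sub_eq_zero, hzp] using ht.1.ne'
  have hlim : Tendsto (fun ε : ℝ => ε * ‖z - p‖) (𝓝[>] 0) (𝓝 0) := by
    simpa using (tendsto_id.mul_const ‖z - p‖).mono_left (nhdsWithin_le_nhds (a := (0 : ℝ)))
  refine ge_of_tendsto hlim (eventually_nhdsWithin_of_forall fun ε hε => ?_)
  obtain ⟨t, ht, ht0 : 0 < t⟩ := ((hseg.eventually (hl.2 ε hε)).and self_mem_nhdsWithin).exists
  simp only [add_sub_cancel_left, map_smul, norm_smul, smul_eq_mul, Real.norm_eq_abs,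
    abs_of_pos ht0, mul_left_comm ε] at ht
  exact le_of_mul_le_mul_left ht ht0

end ConvexAnalysis

section Ekeland

variable {E : Type*} [NormedAddCommGroup E] {C : Set E} {f Φ : E → ℝ}

def ekelandSet (C : Set E) (f Φ : E → ℝ) (p : E) : Set E :=
  {q ∈ C | f q + Φ (q - p) ≤ f p}

theorem self_mem_ekelandSet (hΦ0 : Φ 0 = 0) {p : E} (hp : p ∈ C) : p ∈ ekelandSet C f Φ p :=
  ⟨hp, by simp [hΦ0]⟩

theorem ekelandSet_subset (hΦadd : ∀ z w, Φ (z + w) ≤ Φ z + Φ w) {p q : E}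
    (hq : q ∈ ekelandSet C f Φ p) : ekelandSet C f Φ q ⊆ ekelandSet C f Φ p := fun w hw =>
  ⟨hw.1, by linarith [hq.2, hw.2, sub_add_sub_cancel w q p ▸ hΦadd (w - q) (q - p)]⟩

theorem isClosed_ekelandSet (hC : IsClosed C) (hf : LowerSemicontinuous f) (hΦ : Continuous Φ)
    (p : E) : IsClosed (ekelandSet C f Φ p) :=
  hC.inter <| (hf.add (hΦ.comp (continuous_sub_right p)).lowerSemicontinuous).isClosed_preimage _

theorem exists_ekeland_seq (hfC : BddBelow (f '' C)) (hΦ0 : Φ 0 = 0) {p : E} (hp : p ∈ C) :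
    ∃ u : ℕ → E, u 0 = p ∧ ∀ n, u (n + 1) ∈ ekelandSet C f Φ (u n) ∧
      ∀ q ∈ ekelandSet C f Φ (u n), f (u (n + 1)) ≤ f q + (1 / 2) ^ n := by
  have hnext : ∀ p ∈ C, ∀ n : ℕ, ∃ q ∈ ekelandSet C f Φ p,
      ∀ w ∈ ekelandSet C f Φ p, f q ≤ f w + (1 / 2) ^ n := fun p hp n => by
    obtain ⟨_, ⟨q, hq, rfl⟩, hlt⟩ := Real.lt_sInf_add_pos
      ((Set.nonempty_of_mem (self_mem_ekelandSet hΦ0 hp)).image f)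
      (by positivity : (0 : ℝ) < (1 / 2) ^ n)
    refine ⟨q, hq, fun w hw => hlt.le.trans ?_⟩
    gcongr
    exact csInf_le (hfC.mono (Set.image_mono fun _ h => h.1)) ⟨w, hw, rfl⟩
  choose! next hnextS hnextf using hnext
  let u : ℕ → E := fun n => Nat.rec p (fun n q => next q n) n
  have huC : ∀ n, u n ∈ C := fun n => by
    induction n with
    | zero => exact hp
    | succ n ih => exact (hnextS _ ih n).1
  exact ⟨u, rfl, fun n => ⟨hnextS _ (huC n) n, hnextf _ (huC n) n⟩⟩

theorem ekeland_variational_principle [CompleteSpace E] (hC : IsClosed C)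
    (hf : LowerSemicontinuous f) (hfC : BddBelow (f '' C)) (hΦ : Continuous Φ) (hΦ0 : Φ 0 = 0)
    (hΦadd : ∀ z w, Φ (z + w) ≤ Φ z + Φ w) {m : ℝ} (hm : 0 < m) (hΦm : ∀ z, m * ‖z‖ ≤ Φ z)
    {p : E} (hp : p ∈ C) :
    ∃ p' ∈ C, f p' + Φ (p' - p) ≤ f p ∧ ∀ q ∈ C, f p' ≤ f q + Φ (q - p') := by
  have hΦnn : ∀ z, 0 ≤ Φ z := fun z => (by positivity : 0 ≤ m * ‖z‖).trans (hΦm z)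
  obtain ⟨u, hu0, hu⟩ := exists_ekeland_seq hfC hΦ0 hp
  have huC : ∀ n, u n ∈ C := fun n => by
    cases n
    exacts [hu0 ▸ hp, (hu _).1.1]
  have hchain : ∀ n k, n ≤ k → u k ∈ ekelandSet C f Φ (u n) := fun n k hnk => by
    induction k, hnk using Nat.le_induction with
    | base => exact self_mem_ekelandSet hΦ0 (huC n)
    | succ k _ ih => exact ekelandSet_subset hΦadd ih (hu k).1
  have hsmall : ∀ n, ∀ q ∈ ekelandSet C f Φ (u (n + 1)), Φ (q - u (n + 1)) ≤ (1 / 2) ^ n :=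
    fun n q hq => by linarith [hq.2, (hu n).2 q (ekelandSet_subset hΦadd (hu n).1 hq)]
  have hcauchy : CauchySeq u := by
    refine Metric.cauchySeq_iff'.2 fun ε hε => ?_
    obtain ⟨n, hn⟩ :=
      exists_pow_lt_of_lt_one (by positivity : 0 < m * ε) (by norm_num : (1 / 2 : ℝ) < 1)
    refine ⟨n + 1, fun k hk => ?_⟩
    have := (hΦm _).trans (hsmall n _ (hchain _ _ hk))
    rw [dist_eq_norm]
    nlinarith
  obtain ⟨p', hp'⟩ := cauchySeq_tendsto_of_complete hcauchy
  have hp'S : ∀ n, p' ∈ ekelandSet C f Φ (u n) := fun n =>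
    (isClosed_ekelandSet hC hf hΦ (u n)).mem_of_tendsto hp'
      ((eventually_ge_atTop n).mono (hchain n))
  refine ⟨p', (hp'S 0).1, hu0 ▸ (hp'S 0).2, fun q hq => ?_⟩
  by_contra! hlt
  have hqS : ∀ n, q ∈ ekelandSet C f Φ (u n) := fun n =>
    ekelandSet_subset hΦadd (hp'S n) ⟨hq, hlt.le⟩
  have hle : ∀ n : ℕ, f p' ≤ f q + (1 / 2) ^ n := fun n => by
    linarith [(hp'S (n + 1)).2, hΦnn (p' - u (n + 1)), (hu n).2 q (hqS n)]
  have hlim : Tendsto (fun n : ℕ => f q + (1 / 2 : ℝ) ^ n) atTop (𝓝 (f q)) := by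
    simpa using tendsto_const_nhds.add
      (tendsto_pow_atTop_nhds_zero_of_lt_one (by norm_num : (0 : ℝ) ≤ 1 / 2) (by norm_num))
  linarith [ge_of_tendsto' hlim hle, hΦnn (q - p')]

theorem exists_ekeland_prod {X Y : Type*} [NormedAddCommGroup X] [NormedAddCommGroup Y]
    [CompleteSpace X] [CompleteSpace Y] {C : Set (X × Y)}
    (hC : IsClosed C) {f : X × Y → ℝ} (hf : LowerSemicontinuous f) (hfC : BddBelow (f '' C))
    {a b : ℝ} (ha : 0 < a) (hb : 0 < b) {p : X × Y} (hp : p ∈ C) :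
    ∃ p' ∈ C, f p' + (a * ‖p'.1 - p.1‖ + b * ‖p'.2 - p.2‖) ≤ f p ∧
      ∀ q ∈ C, f p' ≤ f q + (a * ‖q.1 - p'.1‖ + b * ‖q.2 - p'.2‖) := by
  refine ekeland_variational_principle (Φ := fun z => a * ‖z.1‖ + b * ‖z.2‖) hC hf hfC
    (by fun_prop) (by simp) (fun z w => ?_) (lt_min ha hb) (fun z => ?_) hp
  · simp only [Prod.fst_add, Prod.snd_add]
    nlinarith [norm_add_le z.1 w.1, norm_add_le z.2 w.2]
  · have hz : ‖z‖ ≤ ‖z.1‖ + ‖z.2‖ :=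
      max_le (le_add_of_nonneg_right (norm_nonneg _)) (le_add_of_nonneg_left (norm_nonneg _))
    nlinarith [min_le_left a b, min_le_right a b, lt_min ha hb, norm_nonneg z.1, norm_nonneg z.2]

end Ekeland

theorem le_mul_infEDist {α : Type*} [PseudoEMetricSpace α] {x : α} {s : Set α} {a c : ℝ≥0∞}
    (hs : s.Nonempty) (ha : a ≠ ⊤) (h : ∀ y ∈ s, c ≤ a * edist x y) : c ≤ a * infEDist x s := by
  rcases eq_or_ne a 0 with rfl | ha₀
  · obtain ⟨y, hy⟩ := hs
    simpa using h y hy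
  · rw [mul_comm, ← ENNReal.div_le_iff ha₀ ha]
    exact le_infEDist.2 fun y hy => (ENNReal.div_le_iff ha₀ ha).2 (mul_comm a _ ▸ h y hy)

theorem exists_isClosed_inter_closedBall {E : Type*} [PseudoMetricSpace E] {Ω U : Set E} {p : E}
    (hU : U ∈ 𝓝 p) (hΩU : IsClosed (Ω ∩ U)) {ρ : ℝ} (hρ : 0 < ρ) :
    ∃ r, 0 < r ∧ r ≤ ρ ∧ IsClosed (Ω ∩ closedBall p r) := by
  obtain ⟨ε, hε, hεU⟩ := nhds_basis_closedBall.mem_iff.1 hU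
  refine ⟨min ε ρ, lt_min hε hρ, min_le_right _ _, ?_⟩
  have hsub : closedBall p (min ε ρ) ⊆ U :=
    (closedBall_subset_closedBall (min_le_left _ _)).trans hεU
  rw [← Set.inter_eq_right.2 hsub, ← Set.inter_assoc]
  exact hΩU.inter isClosed_closedBall

section Subregularity

variable {X Y : Type*} [NormedAddCommGroup X] [NormedAddCommGroup Y] {F : X → Set Y} {x₀ : X}
  {y₀ : Y}

theorem infEDist_ne_zero_of_isClosed {r : ℝ}
    (hC : IsClosed ({p : X × Y | p.2 ∈ F p.1} ∩ closedBall (x₀, y₀) r)) (hr : 0 < r) {x : X}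
    (hx : dist x x₀ ≤ r) (hy₀ : y₀ ∉ F x) : infEDist y₀ (F x) ≠ 0 := by
  rw [Ne, ← mem_closure_iff_infEDist_zero]
  intro hcl
  have hslice : IsClosed {v | (x, v) ∈ {p : X × Y | p.2 ∈ F p.1} ∩ closedBall (x₀, y₀) r} :=
    hC.preimage (Continuous.prodMk_right x)
  have hsub : ball y₀ r ∩ F x ⊆
      {v | (x, v) ∈ {p : X × Y | p.2 ∈ F p.1} ∩ closedBall (x₀, y₀) r} :=
    fun v ⟨hv, hvF⟩ => ⟨hvF, by simpa [Prod.dist_eq, hx] using (mem_ball.1 hv).le⟩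
  exact hy₀
    (hslice.closure_subset_iff.2 hsub (isOpen_ball.inter_closure ⟨mem_ball_self hr, hcl⟩)).1

theorem exists_norm_sub_lt_of_srMod_lt (hgph : y₀ ∈ F x₀) {c : ℝ≥0} (hc : srMod F x₀ y₀ < c)
    {δ : ℝ} (hδ : 0 < δ) (hA : ∀ x, dist x x₀ < δ → y₀ ∉ F x → infEDist y₀ (F x) ≠ 0) :
    ∃ x y s, y ∈ F x ∧ dist x x₀ < δ ∧ (∀ u, y₀ ∈ F u → s ≤ dist x u) ∧ ‖y - y₀‖ < c * s := by
  obtain ⟨x, hxδ, hx, hlt⟩ : ∃ x, dist x x₀ < δ ∧ y₀ ∉ F x ∧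
      infEDist y₀ (F x) / infEDist x {x' | y₀ ∈ F x'} < c := by
    by_contra! h
    exact hc.not_ge (le_iSup₂_of_le δ hδ (le_iInf₂ fun x hx => h x hx.1 hx.2))
  set S := {x' | y₀ ∈ F x'}
  have hS_top : infEDist x S ≠ ⊤ :=
    ne_top_of_le_ne_top (edist_ne_top x x₀) (infEDist_le_edist_of_mem hgph)
  have hS_zero : infEDist x S ≠ 0 := fun h => by
    simp [h, ENNReal.div_zero (hA x hxδ hx)] at hlt
  obtain ⟨y, hy, hyc⟩ :=
    infEDist_lt_iff.1 ((ENNReal.div_lt_iff (.inl hS_zero) (.inl hS_top)).1 hlt)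
  refine ⟨x, y, (infEDist x S).toReal, hy, hxδ, fun u hu => ?_, ?_⟩
  · exact ENNReal.toReal_le_of_le_ofReal dist_nonneg
      ((infEDist_le_edist_of_mem (s := S) hu).trans_eq (edist_dist x u))
  · have := ENNReal.toReal_strict_mono (ENNReal.mul_ne_top ENNReal.coe_ne_top hS_top) hyc
    rwa [← dist_edist, dist_comm, dist_eq_norm, ENNReal.toReal_mul, ENNReal.coe_toReal] at this

variable [NormedSpace ℝ X] [NormedSpace ℝ Y]

theorem one_sub_mul_norm_le_of_mem_coderiv (hconv : Convex ℝ {p : X × Y | p.2 ∈ F p.1})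
    {x u : X} {y : Y} {ρ : ℝ} {l : X →L[ℝ] ℝ} {q j : Y →L[ℝ] ℝ} (hj : j ∈ dualityMap (y - y₀))
    (hqj : ‖q - j‖ ≤ ρ) (hl : l ∈ coderiv F x y q) (hu : y₀ ∈ F u) :
    (1 - ρ) * ‖y - y₀‖ ≤ ‖l‖ * ‖x - u‖ := by
  have hnormal := hconv.apply_sub_nonpos_of_mem_frNormalCone hl (z := (u, y₀)) hu
  simp only [Prod.mk_sub_mk, ContinuousLinearMap.coprod_apply, neg_apply,
    ← neg_sub x u, ← neg_sub y y₀, map_neg] at hnormal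
  have hqj' : j (y - y₀) - q (y - y₀) ≤ ρ * ‖y - y₀‖ := by
    have := (le_abs_self _).trans ((j - q).le_opNorm (y - y₀))
    rw [← norm_neg (j - q), neg_sub] at this
    exact this.trans (by gcongr)
  have hlx : l (x - u) ≤ ‖l‖ * ‖x - u‖ := (le_abs_self _).trans (l.le_opNorm _)
  rw [hj.2] at hqj'
  linarith

theorem ofReal_one_sub_mul_le_sdSlopeF (hconv : Convex ℝ {p : X × Y | p.2 ∈ F p.1})
    (hgph : y₀ ∈ F x₀) (ρ : ℝ) (x : X) (y : Y) :
    ENNReal.ofReal (1 - ρ) * (infEDist y₀ (F x) / infEDist x {x' | y₀ ∈ F x'}) ≤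
      sdSlopeF F y₀ ρ x y := by
  refine le_iInf₂ fun l ⟨q, j, hj, hqj, hl⟩ => ?_
  rw [← mul_div_assoc]
  refine ENNReal.div_le_of_le_mul (le_mul_infEDist ⟨x₀, hgph⟩ ENNReal.coe_ne_top fun u hu => ?_)
  calc ENNReal.ofReal (1 - ρ) * infEDist y₀ (F x)
      ≤ ENNReal.ofReal (1 - ρ) * ENNReal.ofReal ‖y - y₀‖ := by
        rw [← dist_eq_norm, dist_comm, ← edist_dist]
        exact mul_le_mul_right (infEDist_le_edist_of_mem (s := F x) hl.1) _
    _ = ENNReal.ofReal ((1 - ρ) * ‖y - y₀‖) := (ENNReal.ofReal_mul' (norm_nonneg _)).symm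
    _ ≤ ENNReal.ofReal (‖l‖ * ‖x - u‖) :=
        ENNReal.ofReal_le_ofReal (one_sub_mul_norm_le_of_mem_coderiv hconv hj hqj hl hu)
    _ = ‖l‖₊ * edist x u := by
        rw [ENNReal.ofReal_mul (norm_nonneg _), ofReal_norm, enorm_eq_nnnorm, edist_dist,
          dist_eq_norm]

theorem srMod_le_strictSdSlopeF (hconv : Convex ℝ {p : X × Y | p.2 ∈ F p.1})
    (hgph : y₀ ∈ F x₀) : srMod F x₀ y₀ ≤ strictSdSlopeF F x₀ y₀ := by
  refine iSup₂_le fun δ hδ => ?_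
  set I := ⨅ (x : X) (_ : dist x x₀ < δ ∧ y₀ ∉ F x),
    infEDist y₀ (F x) / infEDist x {x' | y₀ ∈ F x'}
  have hbound : ∀ ρ ∈ Set.Ioo 0 δ, ENNReal.ofReal (1 - ρ) * I ≤ strictSdSlopeF F x₀ y₀ := by
    refine fun ρ hρ => le_trans (le_iInf₂ fun p hp => ?_) (le_iSup₂_of_le ρ hρ.1 le_rfl)
    have hx : dist p.1 x₀ < δ ∧ y₀ ∉ F p.1 :=
      ⟨by rw [dist_eq_norm]; linarith [hp.2.2.1, hρ.2], hp.2.1⟩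
    exact (mul_le_mul_right (iInf₂_le p.1 hx) _).trans
      (ofReal_one_sub_mul_le_sdSlopeF hconv hgph ρ p.1 p.2)
  have hlim : Tendsto (fun ρ => ENNReal.ofReal (1 - ρ) * I) (𝓝[>] 0) (𝓝 I) := by
    have h₁ : Tendsto (fun ρ : ℝ => 1 - ρ) (𝓝[>] 0) (𝓝 1) :=
      ((continuous_const.sub continuous_id).tendsto' 0 1 (by simp)).mono_left nhdsWithin_le_nhds
    simpa using ENNReal.Tendsto.mul_const (ENNReal.tendsto_ofReal h₁) (.inl (by simp)) (b := I)
  exact le_of_tendsto hlim (eventually_of_mem (Ioo_mem_nhdsGT hδ) hbound)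

theorem neg_mem_coderiv_of_forall_nonneg {x : X} {y : Y} (hxy : y ∈ F x) {V : Set (X × Y)}
    (hV : V ∈ 𝓝 (x, y)) {ξ : X →L[ℝ] ℝ} {η : Y →L[ℝ] ℝ}
    (h : ∀ z ∈ {p : X × Y | p.2 ∈ F p.1} ∩ V, 0 ≤ ξ (z.1 - x) + η (z.2 - y)) :
    -ξ ∈ coderiv F x y η :=
  mem_frNormalCone_of_eventually hxy <| Filter.mem_of_superset hV fun z hzV hz => by
    have := h z ⟨hz, hzV⟩
    simp only [ContinuousLinearMap.coprod_apply, neg_apply, Prod.fst_sub, Prod.snd_sub]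
    linarith

theorem exists_subgradients_of_forall_le {C : Set (X × Y)} (hC : Convex ℝ C) {x : X} {y : Y}
    (hp : (x, y) ∈ C) (hy : y ≠ y₀) {a b : ℝ} (ha : 0 ≤ a) (hb : 0 ≤ b)
    (hmin : ∀ z ∈ C, ‖y - y₀‖ ≤ ‖z.2 - y₀‖ + (a * ‖z.1 - x‖ + b * ‖z.2 - y‖)) :
    ∃ (ξ : X →L[ℝ] ℝ) (η j : Y →L[ℝ] ℝ), ‖ξ‖ ≤ a ∧ j ∈ dualityMap (y - y₀) ∧ ‖η - j‖ ≤ b ∧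
      ∀ z ∈ C, 0 ≤ ξ (z.1 - x) + η (z.2 - y) := by
  set g : X × Y → ℝ := fun z => ‖z.2 - y₀‖ + (a * ‖z.1 - x‖ + b * ‖z.2 - y‖)
  have hg : ConvexOn ℝ Set.univ g :=
    ((ContinuousLinearMap.snd ℝ X Y).convexOn_norm_sub y₀).add
      ((((ContinuousLinearMap.fst ℝ X Y).convexOn_norm_sub x).smul ha).add
        (((ContinuousLinearMap.snd ℝ X Y).convexOn_norm_sub y).smul hb))
  obtain ⟨h, hhg, hhC⟩ := exists_hasSubgradientAt_of_le_add hC (convexOn_const 0 hC) hg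
    (by fun_prop) hp (η := 0) fun z hz => by simpa [g] using hmin z hz
  set η := h.comp (.inr ℝ X Y)
  have hη : ∀ v, η (v - y) ≤ ‖v - y₀‖ + b * ‖v - y‖ - (‖y - y₀‖ + b * ‖y - y‖) := fun v => by
    have := hhg.comp_inr v
    simp only [g, sub_self, norm_zero, mul_zero, zero_add, add_zero] at this ⊢
    exact this
  obtain ⟨κ, hκ, hj⟩ := exists_hasSubgradientAt_of_le_add convex_univ
    ((ContinuousLinearMap.id ℝ Y).convexOn_norm_sub y₀)
    (((ContinuousLinearMap.id ℝ Y).convexOn_norm_sub y).smul hb) (by fun_prop) (Set.mem_univ y)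
    fun v _ => hη v
  refine ⟨h.comp (.inl ℝ X Y), η, η - κ, hhg.comp_inl.norm_le ha fun u => by simp [g],
    mem_dualityMap_of_hasSubgradientAt hy fun v => hj v (Set.mem_univ v), ?_, fun z hz => ?_⟩
  · simpa using hκ.norm_le hb fun v => by simp
  · have := hhC z hz
    rw [zero_sub, neg_apply, sub_zero, neg_nonpos, ← h.comp_inl_add_comp_inr] at this
    exact this

theorem exists_sdSlopeF_le [CompleteSpace X] [CompleteSpace Y]
    (hconv : Convex ℝ {p : X × Y | p.2 ∈ F p.1}) {r : ℝ}
    (hC : IsClosed ({p : X × Y | p.2 ∈ F p.1} ∩ closedBall (x₀, y₀) r)) {c : ℝ≥0} {ρ s : ℝ}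
    (hc : 0 < c) (hρ : 0 < ρ) {x : X} {y : Y} (hy : y ∈ F x) (hS : ∀ u, y₀ ∈ F u → s ≤ dist x u)
    (hys : ‖y - y₀‖ < c * s) (hxr : dist x x₀ + s ≤ r) (hyr : ‖y - y₀‖ < r) :
    ∃ x' y', y' ∈ F x' ∧ y₀ ∉ F x' ∧ dist x' x₀ < r ∧ dist y' y₀ < r ∧
      sdSlopeF F y₀ ρ x' y' ≤ c := by
  have hs : 0 < s := pos_of_mul_pos_right ((norm_nonneg _).trans_lt hys) c.2
  have hxyC : (x, y) ∈ {p : X × Y | p.2 ∈ F p.1} ∩ closedBall (x₀, y₀) r :=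
    ⟨hy, mem_closedBall.2 (max_le (by linarith) (dist_eq_norm y y₀ ▸ hyr.le))⟩
  obtain ⟨⟨x', y'⟩, hp'C, hdecr, hmin⟩ := exists_ekeland_prod hC (f := fun z => ‖z.2 - y₀‖)
    (by fun_prop : Continuous fun z : X × Y => ‖z.2 - y₀‖).lowerSemicontinuous
    ⟨0, by rintro _ ⟨z, -, rfl⟩; positivity⟩ (NNReal.coe_pos.2 hc) hρ hxyC
  dsimp only at hdecr hmin
  have hρy : 0 ≤ ρ * ‖y' - y‖ := by positivity
  have hx'x : ‖x' - x‖ < s := lt_of_mul_lt_mul_left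
    (by linarith [norm_nonneg (y' - y₀)] : (c : ℝ) * ‖x' - x‖ < c * s) c.2
  have hx' : y₀ ∉ F x' := fun h => by
    linarith [hS x' h, dist_eq_norm x x', norm_sub_rev x x']
  have hy' : y' ≠ y₀ := by
    rintro rfl
    exact hx' hp'C.1
  have hball : dist (x', y') (x₀, y₀) < r := by
    refine max_lt ?_ ?_
    · linarith [dist_triangle x' x x₀, dist_eq_norm x' x]
    · have : 0 ≤ (c : ℝ) * ‖x' - x‖ := by positivity
      exact (dist_eq_norm y' y₀).trans_lt (by linarith)
  obtain ⟨ξ, η, j, hξ, hj, hηj, hnonneg⟩ := exists_subgradients_of_forall_le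
    (hconv.inter (convex_closedBall _ _)) hp'C hy' c.2 hρ.le
    fun z hz => by simpa using hmin z hz
  have hcod : -ξ ∈ coderiv F x' y' η :=
    neg_mem_coderiv_of_forall_nonneg (x := x') (y := y') hp'C.1
      (Filter.mem_of_superset (isOpen_ball.mem_nhds hball) ball_subset_closedBall) hnonneg
  refine ⟨x', y', hp'C.1, hx', (le_max_left _ _).trans_lt hball,
    (le_max_right _ _).trans_lt hball, ?_⟩
  calc sdSlopeF F y₀ ρ x' y' ≤ ‖-ξ‖₊ := iInf₂_le (-ξ) ⟨η, j, hj, hηj, hcod⟩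
    _ ≤ c := by
      rw [nnnorm_neg]
      exact_mod_cast hξ

theorem strictSdSlopeF_le_srMod [CompleteSpace X] [CompleteSpace Y]
    (hconv : Convex ℝ {p : X × Y | p.2 ∈ F p.1}) (hgph : y₀ ∈ F x₀) {U : Set (X × Y)}
    (hU : U ∈ 𝓝 (x₀, y₀)) (hFU : IsClosed ({p : X × Y | p.2 ∈ F p.1} ∩ U)) :
    strictSdSlopeF F x₀ y₀ ≤ srMod F x₀ y₀ := by
  refine iSup₂_le fun ρ hρ => le_of_forall_gt fun c hc => ?_
  obtain ⟨c₁, hc₁M, hc₁c⟩ := ENNReal.lt_iff_exists_nnreal_btwn.1 hc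
  have hc₁ : 0 < c₁ := ENNReal.coe_pos.1 (pos_of_gt hc₁M)
  obtain ⟨r, hr, hrρ, hC⟩ := exists_isClosed_inter_closedBall hU hFU hρ
  -- With `δ = r / (c₁ + 2)`: `dist x x₀ + s < 2 δ ≤ r` and `‖y - y₀‖ < c₁ s < c₁ δ ≤ r`.
  have hδ : 0 < r / (c₁ + 2) := by positivity
  obtain ⟨x, y, s, hy, hxδ, hS, hys⟩ := exists_norm_sub_lt_of_srMod_lt hgph hc₁M hδ
    fun x hx => infEDist_ne_zero_of_isClosed hC hr (hx.le.trans (div_le_self hr.le (by linarith)))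
  have hδr : (c₁ + 2) * (r / (c₁ + 2)) = r := mul_div_cancel₀ r (by positivity)
  have hsx : s ≤ dist x x₀ := dist_comm x₀ x ▸ hS x₀ hgph
  obtain ⟨x', y', hy', hx', hx'r, hy'r, hslope⟩ := exists_sdSlopeF_le hconv hC hc₁ hρ hy hS hys
    (by nlinarith) (by nlinarith [c₁.2])
  calc _ ≤ sdSlopeF F y₀ ρ x' y' := iInf₂_le (x', y')
        ⟨hy', hx', by linarith [dist_eq_norm x' x₀], by linarith [dist_eq_norm y' y₀]⟩
    _ < c := hslope.trans_lt hc₁c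

end Subregularity

/-- if `X`, `Y` are Banach spaces and `gph F` is convex and locally closed
near `(x̄,ȳ) ∈ gph F`, then `sr[F](x̄,ȳ) = \overline{|∂F|}(x̄,ȳ)`. -/
theorem srMod_eq_strictSdSlopeF {X Y : Type*}
    [NormedAddCommGroup X] [NormedSpace ℝ X] [CompleteSpace X]
    [NormedAddCommGroup Y] [NormedSpace ℝ Y] [CompleteSpace Y]
    (F : X → Set Y) (x₀ : X) (y₀ : Y) (hgph : y₀ ∈ F x₀)
    (hconv : Convex ℝ {p : X × Y | p.2 ∈ F p.1})
    (hclosed : ∃ U ∈ 𝓝 (x₀, y₀), IsClosed U ∧ IsClosed ({p : X × Y | p.2 ∈ F p.1} ∩ U)) :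
    srMod F x₀ y₀ = strictSdSlopeF F x₀ y₀ := by
  obtain ⟨U, hU, -, hFU⟩ := hclosed
  exact le_antisymm (srMod_le_strictSdSlopeF hconv hgph)
    (strictSdSlopeF_le_srMod hconv hgph hU hFU)
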